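/- arXiv:2102.12842 — 6 statements merged into one kernel-verified Lean document; each statement's English description precedes it below -/
import Mathlib

section
/- The encoding of a monoid-valued functor is uniform: for a commutative monoid M, the monoid-valued functor M^(−) with label set A = M and encoding ♭_X : M^(X) → B(M × X) given by ♭_X(t)(m,x) = 1 if t(x) = m ≠ 0 and 0 otherwise, satisfies fil_{{x}} ∘ ♭_X = fil_{{1}} ∘ ♭_2 ∘ M^(χ_{{x}}) for every set X and x ∈ X. -/
/-!
Both sides are the one-element bag `[t x]` (empty when `t x = 0`): filtering `♭_X t` at `{x}`
keeps only the atom `(t x, x)`, and `M^(χ_{x}) t` takes the value `t x` at `true`.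
-/

open scoped Classical

/-- Filter map `fil_S : B(A × X) → B(A)`, `fil_S(f)(a) = Σ_{x ∈ S} f(a,x)`. -/
noncomputable def fil {A X : Type} (S : Set X) (f : (A × X) →₀ ℕ) : A →₀ ℕ :=
  f.sum fun p n => if p.2 ∈ S then Finsupp.single p.1 n else 0

/-- Characteristic function `χ_S : X → 2`, where `2 = Bool` with `true = 1`. -/
noncomputable def chi {X : Type} (S : Set X) : X → Bool :=
  fun x => if x ∈ S then true else false

/-- `group = curry ∘ B(swap) : B(A × X) → (B A)^(X)`. -/
noncomputable def bagGroup {A X : Type} (f : (A × X) →₀ ℕ) : X →₀ (A →₀ ℕ) :=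
  Finsupp.finsuppProdEquiv (Finsupp.mapDomain Prod.swap f)

/-- `ungroup = B(swap) ∘ uncurry : (B A)^(X) → B(A × X)`. -/
noncomputable def bagUngroup {A X : Type} (g : X →₀ (A →₀ ℕ)) : (A × X) →₀ ℕ :=
  Finsupp.mapDomain Prod.swap (Finsupp.finsuppProdEquiv.symm g)

/-- Encoding of the monoid-valued functor: `♭_X(t)(m,x) = 1` iff `t(x) = m ≠ 0`. -/
noncomputable def flatM {M X : Type} [AddCommMonoid M] (t : X →₀ M) : (M × X) →₀ ℕ :=
  t.support.sum fun x => Finsupp.single (t x, x) 1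

open Finsupp

section Filter

variable {A X : Type}

lemma fil_single (S : Set X) (a : A) (y : X) (n : ℕ) :
    fil S (single (a, y) n) = if y ∈ S then single a n else 0 := by
  unfold fil
  rw [sum_single_index]
  split_ifs <;> simp

lemma fil_sum {ι : Type} (S : Set X) (s : Finset ι) (g : ι → (A × X) →₀ ℕ) :
    fil S (∑ i ∈ s, g i) = ∑ i ∈ s, fil S (g i) :=
  (sum_finsetSum_index (fun _ => by split_ifs <;> simp)
    (fun _ _ _ => by split_ifs <;> simp [single_add])).symm

end Filter

section Encoding

variable {M X : Type} [AddCommMonoid M]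

lemma fil_flatM (S : Set X) (t : X →₀ M) :
    fil S (flatM t) = ∑ y ∈ t.support, if y ∈ S then single (t y) 1 else 0 := by
  simp only [flatM, fil_sum, fil_single]

lemma fil_singleton_flatM (x : X) (t : X →₀ M) :
    fil {x} (flatM t) = if t x = 0 then 0 else single (t x) 1 := by
  rw [fil_flatM]
  simp only [Set.mem_singleton_iff, Finset.sum_ite_eq', mem_support_iff, ne_eq, ite_not]

lemma mapDomain_chi_singleton_apply_true (x : X) (t : X →₀ M) :
    mapDomain (chi {x}) t true = t x := by
  have hx : chi {x} x = true := by simp [chi]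
  rw [← hx, mapDomain_apply_eq_sum]
  simp [chi, Finset.sum_filter, eq_comm]

end Encoding

/-- the encoding of a monoid-valued functor is uniform. -/
theorem monoidValued_encoding_uniform {M X : Type} [AddCommMonoid M]
    (x : X) (t : X →₀ M) :
    fil {x} (flatM t) = fil {true} (flatM (Finsupp.mapDomain (chi {x}) t)) := by
  rw [fil_singleton_flatM, fil_singleton_flatM, mapDomain_chi_singleton_apply_true]
end

section
/- Every natural encoding is uniform: if ♭_X : FX → B(A × X) is natural in X, then for every x ∈ X, fil_{{x}} ∘ ♭_X = fil_{{1}} ∘ ♭_2 ∘ F(χ_{{x}}). -/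
open scoped Classical

/-- every natural encoding is uniform. -/
theorem natural_encoding_is_uniform {A : Type} (F : Type → Type)
    (Fmap : ∀ {X Y : Type}, (X → Y) → F X → F Y)
    (flat : ∀ (X : Type), F X → ((A × X) →₀ ℕ))
    (hnat : ∀ (X Y : Type) (f : X → Y) (t : F X),
      Finsupp.mapDomain (Prod.map id f) (flat X t) = flat Y (Fmap f t)) :
    ∀ (X : Type) (x : X) (t : F X),
      fil {x} (flat X t) = fil {true} (flat Bool (Fmap (chi {x}) t)) := by
  intro X x t
  rw [← hnat X Bool (chi {x}) t]
  unfold fil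
  rw [Finsupp.sum_mapDomain_index]
  · refine Finsupp.sum_congr fun p _ => ?_
    simp only [Prod.map, id_eq, chi, Set.mem_singleton_iff]
    by_cases h : p.2 = x <;> simp [h]
  · intro p; simp
  · intro p m n; split <;> simp [Finsupp.single_add]
end

section
/- Every uniform encoding is subnatural: if ♭_X : FX → B(A × X) is uniform, then for every injective map m : X → Y, B(A × m) ∘ ♭_X = ♭_Y ∘ F(m). -/
open scoped Classical

lemma fil_single_apply {A X : Type} (y : X) (f : (A × X) →₀ ℕ) (a : A) :
    fil {y} f a = f (a, y) := by
  classical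
  unfold fil
  rw [Finsupp.sum_apply, Finsupp.sum]
  rw [Finset.sum_congr rfl (fun p hp => ?_), Finset.sum_ite_eq' f.support (a,y) (fun p => f (a,y))]
  · by_cases h : (a,y) ∈ f.support
    · simp [h]
    · simp [h, Finsupp.notMem_support_iff.mp h]
  · show (if p.2 ∈ ({y} : Set X) then Finsupp.single p.1 (f p) else 0) a
      = if p = (a,y) then f (a,y) else 0
    by_cases h2 : p.2 = y
    · by_cases h1 : p.1 = a
      · have : p = (a,y) := Prod.ext h1 h2
        simp [this]
      · simp [h2, Finsupp.single_apply, h1, Prod.ext_iff]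
    · simp [h2, Prod.ext_iff]

/-- every uniform encoding is subnatural. -/
theorem uniform_encoding_is_subnatural {A : Type} (F : Type → Type)
    (Fmap : ∀ {X Y : Type}, (X → Y) → F X → F Y)
    (Fmap_id : ∀ (X : Type) (t : F X), Fmap id t = t)
    (Fmap_comp : ∀ {X Y Z : Type} (f : X → Y) (g : Y → Z) (t : F X),
      Fmap (g ∘ f) t = Fmap g (Fmap f t))
    (Finj : ∀ {X Y : Type} (m : X → Y), Function.Injective m →
      Function.Injective (fun t : F X => Fmap m t))
    (flat : ∀ (X : Type), F X → ((A × X) →₀ ℕ))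
    (huniform : ∀ (X : Type) (x : X) (t : F X),
      fil {x} (flat X t) = fil {true} (flat Bool (Fmap (chi {x}) t))) :
    ∀ (X Y : Type) (m : X → Y), Function.Injective m → ∀ t : F X,
      Finsupp.mapDomain (Prod.map id m) (flat X t) = flat Y (Fmap m t) := by
  classical
  -- key zero lemma: the "fresh point" slice vanishes
  have hzero : ∀ (X : Type) (t : F X) (a : A),
      fil {true} (flat Bool (Fmap (fun _ : X => false) t)) a = 0 := by
    intro X t a
    by_contra hc
    set t' : F (X ⊕ ℕ) := Fmap Sum.inl t with ht'
    have hslice : ∀ n : ℕ, flat (X ⊕ ℕ) t' (a, Sum.inr n) ≠ 0 := by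
      intro n
      have h1 : fil {Sum.inr n} (flat (X ⊕ ℕ) t') a
          = fil {true} (flat Bool (Fmap (chi {Sum.inr n}) t')) a := by
        rw [huniform]
      have h2 : Fmap (chi {(Sum.inr n : X ⊕ ℕ)}) t' = Fmap (fun _ : X => false) t := by
        rw [ht', ← Fmap_comp]
        congr 1
        funext x
        simp [chi, Function.comp]
      rw [fil_single_apply, h2] at h1
      rw [h1]
      exact hc
    have hmem : ∀ n : ℕ, ((a, Sum.inr n) : A × (X ⊕ ℕ)) ∈ (flat (X ⊕ ℕ) t').support := by
      intro n; exact Finsupp.mem_support_iff.mpr (hslice n)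
    have hinj : Function.Injective (fun n : ℕ => ((a, Sum.inr n) : A × (X ⊕ ℕ))) := by
      intro n m h
      simpa using h
    have : ((flat (X ⊕ ℕ) t').support : Set (A × (X ⊕ ℕ))).Infinite :=
      Set.infinite_of_injective_forall_mem hinj (fun n => hmem n)
    exact this ((flat (X ⊕ ℕ) t').support.finite_toSet)
  intro X Y m hm t
  ext ⟨a, y⟩
  have hRHS : flat Y (Fmap m t) (a, y)
      = fil {true} (flat Bool (Fmap (chi {y} ∘ m) t)) a := by
    rw [← fil_single_apply y, huniform, Fmap_comp]
  by_cases hy : y ∈ Set.range m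
  · obtain ⟨x, hx⟩ := hy
    have hchi : chi {y} ∘ m = chi {x} := by
      funext x'
      simp only [chi, Function.comp, Set.mem_singleton_iff]
      by_cases h : x' = x
      · simp [h, hx]
      · have : m x' ≠ y := fun he => h (hm (he.trans hx.symm))
        simp [h, this]
    have hmapinj : Function.Injective (Prod.map (id : A → A) m) :=
      Function.Injective.prodMap Function.injective_id hm
    have hL : Finsupp.mapDomain (Prod.map id m) (flat X t) (a, y) = flat X t (a, x) := by
      have : (a, y) = Prod.map (id : A → A) m (a, x) := by simp [hx]
      rw [this, Finsupp.mapDomain_apply hmapinj]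
    rw [hL, hRHS, hchi, ← huniform, fil_single_apply]
  · have hchi : chi {y} ∘ m = fun _ : X => false := by
      funext x'
      have : m x' ≠ y := fun he => hy ⟨x', he⟩
      simp [chi, Function.comp, this]
    have hL : Finsupp.mapDomain (Prod.map id m) (flat X t) (a, y) = 0 := by
      apply Finsupp.mapDomain_notin_range
      rintro ⟨⟨a', x'⟩, hp⟩
      exact hy ⟨x', (Prod.ext_iff.mp hp).2⟩
    rw [hL, hRHS, hchi, hzero]
end

section
/- For a uniform encoding, the 5-gon condition holds: the diagram fil_{{1}} ∘ ♭_2 ∘ F(0 : 1 → 2) = (constant empty bag) ∘ ! : F1 → B(A) commutes, i.e., for every t ∈ F1, the bag fil_{{1}}(♭_2(F(0)(t))) is empty, where 0 : 1 → 2 is the inclusion of {0} into {0,1}. -/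
open scoped Classical

lemma fil_eq_zero_of_notMem {A X : Type} (S : Set X) (f : (A × X) →₀ ℕ)
    (h : ∀ p ∈ f.support, p.2 ∉ S) : fil S f = 0 := by
  unfold fil
  apply Finset.sum_eq_zero
  intro p hp
  simp [h p hp]

/-- the 5-gon condition: for a uniform encoding,
`fil_{{1}}(♭_2(F(0 : 1 → 2)(t))) = ⟦⟧` for every `t ∈ F1`. -/
theorem uniform_encoding_fivegon {A : Type} (F : Type → Type)
    (Fmap : ∀ {X Y : Type}, (X → Y) → F X → F Y)
    (Fmap_id : ∀ (X : Type) (t : F X), Fmap id t = t)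
    (Fmap_comp : ∀ {X Y Z : Type} (f : X → Y) (g : Y → Z) (t : F X),
      Fmap (g ∘ f) t = Fmap g (Fmap f t))
    (flat : ∀ (X : Type), F X → ((A × X) →₀ ℕ))
    (huniform : ∀ (X : Type) (x : X) (t : F X),
      fil {x} (flat X t) = fil {true} (flat Bool (Fmap (chi {x}) t))) :
    ∀ t : F Unit, fil {true} (flat Bool (Fmap (fun _ : Unit => false) t)) = 0 := by
  intro t
  set u : F ℕ := Fmap (fun _ : Unit => (0:ℕ)) t with hu
  obtain ⟨x, hx⟩ := (insert 0 ((flat ℕ u).support.image Prod.snd)).exists_notMem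
  have hx0 : x ≠ 0 := by intro h; exact hx (by simp [h])
  have hkey : fil {x} (flat ℕ u) = fil {true} (flat Bool (Fmap (fun _ : Unit => false) t)) := by
    rw [huniform ℕ x u, hu, ← Fmap_comp]
    have hfun : (chi {x} ∘ fun _ : Unit => (0:ℕ)) = fun _ : Unit => false := by
      funext y
      simp [chi, Function.comp, Ne.symm hx0]
    rw [hfun]
  rw [← hkey]
  apply fil_eq_zero_of_notMem
  intro p hp hpS
  apply hx
  simp only [Set.mem_singleton_iff] at hpS
  exact Finset.mem_insert_of_mem (Finset.mem_image.mpr ⟨p, hp, hpS⟩)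
end

section
/- The merge map for a monoid-valued functor is a minimization interface: for a commutative monoid M, defining merge : B(M) → B(M) by merge(ℓ) = ⟦Σℓ⟧ if Σℓ ≠ 0 and ⟦⟧ otherwise (where Σ⟦m₁,…,mₙ⟧ = m₁+…+mₙ), we have merge ∘ fil_S ∘ ♭_X = fil_{{1}} ∘ ♭_2 ∘ M^(χ_S) for all sets X and subsets S ⊆ X. -/
open scoped Classical

/-- The sum `Σ⟦m₁,…,mₙ⟧ = m₁ + ⋯ + mₙ` of a bag of monoid elements. -/
noncomputable def bagSum {M : Type} [AddCommMonoid M] (ℓ : M →₀ ℕ) : M :=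
  ℓ.sum fun m n => n • m

/-- `merge` for the monoid-valued functor. -/
noncomputable def mergeM {M : Type} [AddCommMonoid M] (ℓ : M →₀ ℕ) : M →₀ ℕ :=
  if bagSum ℓ ≠ 0 then Finsupp.single (bagSum ℓ) 1 else 0

/-- `mergeM` is a minimization interface for the monoid-valued
functor `M^(−)`. -/
theorem mergeM_minimization_interface {M : Type} [AddCommMonoid M]
    (X : Type) (S : Set X) (t : X →₀ M) :
    mergeM (fil S (flatM t)) = fil {true} (flatM (Finsupp.mapDomain (chi S) t)) := by
  classical
  -- generic: fil of a flatM-style sum of singles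
  have hfilgen : ∀ {A Y : Type} (T : Set Y) (s : Finset Y) (g : Y → A × Y),
      fil T (∑ x ∈ s, Finsupp.single (g x) 1)
        = ∑ x ∈ s.filter (fun x => (g x).2 ∈ T), Finsupp.single (g x).1 1 := by
    intro A Y T s g
    unfold fil
    rw [← Finsupp.sum_finset_sum_index]
    · rw [Finset.sum_filter]
      refine Finset.sum_congr rfl fun x _ => ?_
      rw [Finsupp.sum_single_index]
      simp
    · intro a; simp
    · intro a b₁ b₂; split <;> simp [Finsupp.single_add]
  have hLHS : fil S (flatM t)
      = ∑ x ∈ t.support.filter (fun x => x ∈ S), Finsupp.single (t x) 1 := by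
    unfold flatM; exact hfilgen S t.support (fun x => (t x, x))
  set s : M := ∑ x ∈ t.support.filter (fun x => x ∈ S), t x with hs
  have hsum : bagSum (fil S (flatM t)) = s := by
    rw [hLHS]
    unfold bagSum
    rw [← Finsupp.sum_finset_sum_index]
    · refine Finset.sum_congr rfl fun x _ => ?_
      rw [Finsupp.sum_single_index] <;> simp
    · intro a; simp
    · intro a b₁ b₂; simp [add_smul]
  set u := Finsupp.mapDomain (chi S) t with hu
  have hut : u true = s := by
    rw [hu, Finsupp.mapDomain, Finsupp.sum_apply, Finsupp.sum, hs, Finset.sum_filter]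
    refine Finset.sum_congr rfl fun x _ => ?_
    rw [Finsupp.single_apply]
    by_cases h : x ∈ S <;> simp [chi, h]
  have hRHS : fil {true} (flatM u)
      = ∑ b ∈ u.support.filter (fun b => b = true), Finsupp.single (u b) 1 := by
    unfold flatM
    rw [hfilgen {true} u.support (fun b => (u b, b))]
    simp
  by_cases h : s = 0
  · have h1 : u.support.filter (fun b => b = true) = ∅ := by
      ext b
      simp only [Finset.mem_filter, Finsupp.mem_support_iff, Finset.notMem_empty,
        iff_false, not_and]
      rintro hb rfl
      exact hb (hut.trans h)
    rw [hRHS, h1, Finset.sum_empty]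
    unfold mergeM
    rw [hsum, h]
    simp
  · have h1 : u.support.filter (fun b => b = true) = {true} := by
      ext b
      simp only [Finset.mem_filter, Finsupp.mem_support_iff, Finset.mem_singleton]
      constructor
      · rintro ⟨_, rfl⟩; rfl
      · rintro rfl; exact ⟨by rw [hut]; exact h, rfl⟩
    rw [hRHS, h1, Finset.sum_singleton, hut]
    unfold mergeM
    rw [hsum]
    simp [h]
end

section
/- The merge map for the finite powerset functor is a minimization interface: defining merge : B(1) → B(1) by merge(ℓ)(*) = min(1, ℓ(*)), we have merge ∘ fil_S ∘ ♭_X = fil_{{1}} ∘ ♭_2 ∘ P_f(χ_S) for all sets X and subsets S ⊆ X. -/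
/-!
Both sides are bags over `Unit`. The left one has multiplicity `min 1 #(t ∩ S)`. On the right,
the elements of `χ_S[t]` equal to `true` form the image of `t ∩ S` under a map that is constantly
`true` there, so there is at most one of them, and there is one exactly when `t ∩ S` is nonempty.
-/

open scoped Classical

/-- Encoding of the finite powerset functor: `♭_X(t)(*,x) = 1` iff `x ∈ t`. -/
noncomputable def flatP {X : Type} (t : Finset X) : (Unit × X) →₀ ℕ :=
  t.sum fun x => Finsupp.single ((), x) 1

/-- `merge` for the finite powerset functor: `merge(ℓ)(*) = min(1, ℓ(*))`. -/
noncomputable def mergeP (ℓ : Unit →₀ ℕ) : Unit →₀ ℕ :=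
  Finsupp.single () (min 1 (ℓ ()))

open Finset

theorem chi_eq_true {X : Type} {S : Set X} {x : X} : chi S x = true ↔ x ∈ S := by
  simp [chi]

theorem Finset.card_image_of_forall_eq {α β : Type*} [DecidableEq β] {s : Finset α} {f : α → β}
    {b : β} (h : ∀ x ∈ s, f x = b) : #(s.image f) = min 1 #s := by
  rcases s.eq_empty_or_nonempty with rfl | hs
  · simp
  · rw [image_congr h, image_const hs, card_singleton]
    have := hs.card_pos
    omega

theorem fil_flatP {X : Type} (S : Set X) (t : Finset X) :
    fil S (flatP t) = Finsupp.single () #{x ∈ t | x ∈ S} := by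
  rw [flatP, fil, ← Finsupp.sum_finsetSum_index (by simp)
    (fun _ _ _ => by split_ifs <;> simp [Finsupp.single_add])]
  simp [Finsupp.sum_single_index, sum_ite]

/-- `mergeP` is a minimization interface for the finite powerset
functor. -/
theorem mergeP_minimization_interface (X : Type) (S : Set X) (t : Finset X) :
    mergeP (fil S (flatP t)) = fil {true} (flatP (t.image (chi S))) := by
  simp only [mergeP, fil_flatP, Finsupp.single_eq_same, Set.mem_singleton_iff, filter_image]
  rw [card_image_of_forall_eq (b := true) (by simp)]
  simp only [chi_eq_true]
end
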